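/- (KL drop, low boosting regime.) Let p and q be probability densities with respect to a σ-finite measure μ with q > 0 and KL(p,q) finite. Let c : X → ℝ be measurable with |c(x)| ≤ c* for all x (c* > 0 being the essential supremum of |c|), and suppose the weak learning guarantees (1/c*)·∫ c·p dμ ≥ γ_P and (1/c*)·∫ (-c)·q dμ ≥ γ_Q hold with γ_P ∈ (0,1] and γ_Q ∈ (0, 1/3). Let θ > 0, φ(θ) = log ∫ exp(θ·c)·q dμ, and q_θ = exp(θ·c - φ(θ))·q. Then KL(p, q_θ) ≤ KL(p,q) - c*·θ·(γ_P + γ_Q - c*·θ/2). -/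

import Mathlib

/-!
Since `q_θ = exp (θ c - φ) q`, the divergence changes by an exact amount:
`KL(p, q_θ) = KL(p, q) - θ ∫ c p + φ`. The first weak-learning guarantee bounds `θ ∫ c p` from
below. For `φ`, Hoeffding's lemma for `c ∈ [-c*, c*]` under the probability measure `q μ` gives
`φ ≤ θ ∫ c q + c*² θ² / 2`, and the second guarantee bounds `∫ c q` from above.
-/

open MeasureTheory

/-- Kullback–Leibler divergence between two densities w.r.t. `μ`. -/
noncomputable def KLd {X : Type*} [MeasurableSpace X] (μ : Measure X)
    (p q : X → ℝ) : ℝ :=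
  ∫ x, p x * Real.log (p x / q x) ∂μ

open ProbabilityTheory Real

lemma mul_log_div_exp_mul (p q t : ℝ) (hq : q ≠ 0) :
    p * log (p / (exp t * q)) = p * log (p / q) - p * t := by
  rcases eq_or_ne p 0 with rfl | hp
  · simp
  rw [div_mul_eq_div_div_swap, div_eq_mul_inv _ (exp t), ← exp_neg,
    log_mul (div_ne_zero hp hq) (exp_pos _).ne', log_exp]
  ring

section

variable {X : Type*} [MeasurableSpace X] {μ : Measure X} {q : X → ℝ}

lemma KLd_exp_mul {p f : X → ℝ}
    (hq : ∀ x, q x ≠ 0) (hKL : Integrable (fun x => p x * log (p x / q x)) μ)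
    (hpf : Integrable (fun x => p x * f x) μ) :
    KLd μ p (fun x => exp (f x) * q x) = KLd μ p q - ∫ x, p x * f x ∂μ := by
  simp only [KLd, mul_log_div_exp_mul _ _ _ (hq _)]
  exact integral_sub hKL hpf

lemma integral_withDensity_ofReal (hq0 : ∀ x, 0 ≤ q x) (hq : Integrable q μ)
    (g : X → ℝ) :
    ∫ x, g x ∂μ.withDensity (fun x => ENNReal.ofReal (q x)) = ∫ x, g x * q x ∂μ := by
  rw [integral_withDensity_eq_integral_toReal_smul₀ hq.aemeasurable.ennreal_ofReal
    (ae_of_all _ fun _ => ENNReal.ofReal_lt_top)]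
  simp only [ENNReal.toReal_ofReal (hq0 _), smul_eq_mul, mul_comm]

lemma isProbabilityMeasure_withDensity_ofReal (hq0 : ∀ x, 0 ≤ q x) (hq : Integrable q μ)
    (hq1 : ∫ x, q x ∂μ = 1) :
    IsProbabilityMeasure (μ.withDensity (fun x => ENNReal.ofReal (q x))) := by
  constructor
  rw [withDensity_apply _ MeasurableSet.univ, Measure.restrict_univ,
    ← ofReal_integral_eq_lintegral_ofReal hq (ae_of_all _ hq0), hq1, ENNReal.ofReal_one]

/-- Hoeffding's lemma, stated for the probability measure with density `q` w.r.t. `μ`. -/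
lemma log_integral_exp_mul_le (hq0 : ∀ x, 0 ≤ q x) (hq : Integrable q μ)
    (hq1 : ∫ x, q x ∂μ = 1) {f : X → ℝ} (hf : Measurable f) {C : ℝ} (hfC : ∀ x, |f x| ≤ C)
    (t : ℝ) :
    log (∫ x, exp (t * f x) * q x ∂μ) ≤ t * ∫ x, f x * q x ∂μ + C ^ 2 * t ^ 2 / 2 := by
  set ν := μ.withDensity (fun x => ENNReal.ofReal (q x))
  have := isProbabilityMeasure_withDensity_ofReal hq0 hq hq1
  have hfν : ∀ᵐ x ∂ν, f x ∈ Set.Icc (-C) C := ae_of_all _ fun x => abs_le.mp (hfC x)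
  have hoeffding := (hasSubgaussianMGF_of_mem_Icc hf.aemeasurable hfν).mgf_le t
  have hvar : (((‖C - -C‖₊ / 2) ^ 2 : NNReal) : ℝ) = C ^ 2 := by
    push_cast
    rw [norm_eq_abs, div_pow, sq_abs]
    ring
  have hcenter : mgf f ν t = mgf (fun x => f x - ν[f]) ν t * exp (t * ν[f]) := by
    rw [← mgf_add_const]
    simp
  have hmgf : mgf f ν t ≤ exp (t * ν[f] + C ^ 2 * t ^ 2 / 2) := by
    rw [hcenter, add_comm, exp_add]
    gcongr
    rwa [hvar] at hoeffding
  have hlog := (log_le_iff_le_exp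
    (mgf_pos (integrable_exp_mul_of_mem_Icc hf.aemeasurable hfν))).2 hmgf
  rwa [mgf, integral_withDensity_ofReal hq0 hq, integral_withDensity_ofReal hq0 hq] at hlog

end

theorem kl_drop_low_boosting_general
    {X : Type*} [MeasurableSpace X] (μ : Measure X)
    (p q : X → ℝ) (hq0 : ∀ x, 0 < q x)
    (hpint : Integrable p μ) (hqint : Integrable q μ)
    (hp1 : ∫ x, p x ∂μ = 1) (hq1 : ∫ x, q x ∂μ = 1)
    (hKLfin : Integrable (fun x => p x * Real.log (p x / q x)) μ)
    (c : X → ℝ) (hcm : Measurable c)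
    (cstar : ℝ) (hcpos : 0 < cstar)
    (hcb : ∀ x, |c x| ≤ cstar)
    (γP γQ : ℝ)
    (hwlaP : γP ≤ (1 / cstar) * ∫ x, c x * p x ∂μ)
    (hwlaQ : γQ ≤ (1 / cstar) * ∫ x, (-c x) * q x ∂μ)
    (θ : ℝ) (hθ : 0 < θ)
    (φ : ℝ) (hφ : φ = Real.log (∫ x, Real.exp (θ * c x) * q x ∂μ))
    (qθ : X → ℝ) (hqθ : ∀ x, qθ x = Real.exp (θ * c x - φ) * q x) :
    KLd μ p qθ ≤ KLd μ p q - cstar * θ * (γP + γQ - cstar * θ / 2) := by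
  have hcp : Integrable (fun x => c x * p x) μ :=
    hpint.bdd_mul hcm.aestronglyMeasurable (ae_of_all _ hcb)
  have hP : cstar * γP ≤ ∫ x, c x * p x ∂μ := by
    rwa [one_div_mul_eq_div, le_div_iff₀' hcpos] at hwlaP
  have hQ : cstar * γQ ≤ -∫ x, c x * q x ∂μ := by
    simp only [neg_mul, integral_neg] at hwlaQ
    rwa [one_div_mul_eq_div, le_div_iff₀' hcpos] at hwlaQ
  have hφle : φ ≤ θ * ∫ x, c x * q x ∂μ + cstar ^ 2 * θ ^ 2 / 2 :=
    hφ ▸ log_integral_exp_mul_le (fun x => (hq0 x).le) hqint hq1 hcm hcb θ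
  have hp_tilt : (fun x => p x * (θ * c x - φ)) = fun x => θ * (c x * p x) - p x * φ := by
    ext x; ring
  have hp_tilt_int : Integrable (fun x => p x * (θ * c x - φ)) μ :=
    hp_tilt ▸ (hcp.const_mul θ).sub (hpint.mul_const φ)
  have hp_tilt_integral : ∫ x, p x * (θ * c x - φ) ∂μ = θ * ∫ x, c x * p x ∂μ - φ := by
    rw [hp_tilt, integral_sub (hcp.const_mul θ) (hpint.mul_const φ), integral_const_mul,
      integral_mul_const, hp1, one_mul]
  have hKL : KLd μ p qθ = KLd μ p q - (θ * ∫ x, c x * p x ∂μ - φ) := by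
    rw [show qθ = fun x => exp (θ * c x - φ) * q x from funext hqθ, ← hp_tilt_integral]
    exact KLd_exp_mul (fun x => (hq0 x).ne') hKLfin hp_tilt_int
  rw [hKL]
  linarith [mul_le_mul_of_nonneg_left hP hθ.le, mul_le_mul_of_nonneg_left hQ hθ.le]

/-- KL drop in the low boosting regime: under the weak learning guarantees
with `γ_Q ∈ (0, 1/3)`, one boosting step with step size `θ > 0` decreases the
KL divergence by at least `c* θ (γ_P + γ_Q - c* θ / 2)`. -/
theorem kl_drop_low_boosting
    {X : Type*} [MeasurableSpace X] (μ : Measure X) [SigmaFinite μ]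
    (p q : X → ℝ) (hpm : Measurable p) (hqm : Measurable q)
    (hp0 : ∀ x, 0 ≤ p x) (hq0 : ∀ x, 0 < q x)
    (hpint : Integrable p μ) (hqint : Integrable q μ)
    (hp1 : ∫ x, p x ∂μ = 1) (hq1 : ∫ x, q x ∂μ = 1)
    (hKLfin : Integrable (fun x => p x * Real.log (p x / q x)) μ)
    (c : X → ℝ) (hcm : Measurable c)
    (cstar : ℝ) (hcstar : cstar = essSup (fun x => |c x|) μ) (hcpos : 0 < cstar)
    (hcb : ∀ x, |c x| ≤ cstar)
    (γP γQ : ℝ) (hγP : γP ∈ Set.Ioc (0 : ℝ) 1) (hγQ : γQ ∈ Set.Ioo (0 : ℝ) (1/3))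
    (hwlaP : γP ≤ (1 / cstar) * ∫ x, c x * p x ∂μ)
    (hwlaQ : γQ ≤ (1 / cstar) * ∫ x, (-c x) * q x ∂μ)
    (θ : ℝ) (hθ : 0 < θ)
    (φ : ℝ) (hφ : φ = Real.log (∫ x, Real.exp (θ * c x) * q x ∂μ))
    (qθ : X → ℝ) (hqθ : ∀ x, qθ x = Real.exp (θ * c x - φ) * q x) :
    KLd μ p qθ ≤ KLd μ p q - cstar * θ * (γP + γQ - cstar * θ / 2) :=
  kl_drop_low_boosting_general μ p q hq0 hpint hqint hp1 hq1 hKLfin c hcm cstar hcpos hcb γP γQ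
    hwlaP hwlaQ θ hθ φ hφ qθ hqθ
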